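/- arXiv:2112.02854 — 3 statements merged into one kernel-verified Lean document; each statement's English description precedes it below -/
import Mathlib

section
/- Let d ≥ 2 and let 𝐯 be a sequence over an alphabet of d letters in which every factor of length d−1 has pairwise distinct letters. Suppose 𝐯 contains a factor of the form abXab, where a and b are distinct letters and X is a (possibly empty) finite word containing neither a nor b. Then |X| ≤ d−2 and the critical exponent of 𝐯 satisfies E(𝐯) ≥ (d+2)/d. -/
open Filter
open scoped ENNReal

namespace BalancedCE

variable {α : Type*} {β : Type*}

/-- The factor of `v` of length `n` starting at position `i`. -/
def factorAt (v : ℕ → α) (i n : ℕ) : List α := (List.range n).map fun k => v (i + k)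

/-- `u` is a factor of the sequence `v`. -/
def IsFactor (v : ℕ → α) (u : List α) : Prop := ∃ i, factorAt v i u.length = u

/-- The word `w` occurs in the sequence `v` at position `i`. -/
def OccursAt (v : ℕ → α) (w : List α) (i : ℕ) : Prop := factorAt v i w.length = w

/-- A sequence is balanced if counts of each letter in equal-length factors differ by at most 1. -/
def Balanced [DecidableEq α] (v : ℕ → α) : Prop :=
  ∀ (a : α) (u w : List α), IsFactor v u → IsFactor v w → u.length = w.length →
    |(u.count a : ℤ) - (w.count a : ℤ)| ≤ 1

def EventuallyPeriodic (v : ℕ → α) : Prop :=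
  ∃ p, 0 < p ∧ ∃ N, ∀ n, N ≤ n → v (n + p) = v n

def Recurrent (v : ℕ → α) : Prop :=
  ∀ u : List α, IsFactor v u → ∀ N : ℕ, ∃ i, N ≤ i ∧ OccursAt v u i

/-- `i < j` are consecutive occurrences of the letter `a` in `v`. -/
def ConsecOcc (v : ℕ → α) (a : α) (i j : ℕ) : Prop :=
  i < j ∧ v i = a ∧ v j = a ∧ ∀ k, i < k → k < j → v k ≠ a

/-- `p` is a period of the finite word `z` (i.e. `z` is a prefix of `u^ω` with `|u| = p`). -/
def IsPeriod (z : List α) (p : ℕ) : Prop :=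
  0 < p ∧ ∀ i, i + p < z.length → z[i]? = z[i + p]?

/-- The minimal period of a finite word. -/
noncomputable def minPeriod (z : List α) : ℕ := sInf {p | IsPeriod z p}

/-- The exponent of a finite word: its length divided by its minimal period. -/
noncomputable def expE (z : List α) : ℝ≥0∞ := (z.length : ℝ≥0∞) / (minPeriod z : ℝ≥0∞)

/-- The critical exponent of a sequence: the supremum of exponents of nonempty factors. -/
noncomputable def criticalExponent (v : ℕ → α) : ℝ≥0∞ :=
  ⨆ (z : List α) (_ : IsFactor v z ∧ z ≠ []), expE z

/-- A Pansiot sequence over a `d`-letter alphabet. -/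
def Pansiot (d : ℕ) (v : ℕ → α) : Prop :=
  (∀ i : ℕ, (factorAt v i (d - 1)).Nodup) ∧
  ∀ (a : α) (i j : ℕ), ConsecOcc v a i j → v (i + 1) ≠ v (j + 1)

/-- The letter `a` has frequency `ρ` in the sequence `v`. -/
def HasFreq [DecidableEq α] (v : ℕ → α) (a : α) (ρ : ℝ) : Prop :=
  Tendsto (fun n => ((factorAt v 0 n).count a : ℝ) / n) atTop (nhds ρ)

/-- Factor complexity of a sequence. -/
noncomputable def complexity (v : ℕ → α) (n : ℕ) : ℕ :=
  Set.ncard {u : List α | IsFactor v u ∧ u.length = n}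

/-- Sturmian sequences: aperiodic binary sequences of factor complexity `n + 1`.
Convention: the letter `a` is `false`, the letter `b` is `true`. -/
def Sturmian (u : ℕ → Bool) : Prop :=
  ¬ EventuallyPeriodic u ∧ ∀ n, complexity u n = n + 1

/-- Prepending a letter to a sequence. -/
def consSeq (c : α) (v : ℕ → α) : ℕ → α := fun n =>
  match n with
  | 0 => c
  | Nat.succ m => v m

/-- A standard sequence: a Sturmian sequence `u` such that `a·u` and `b·u` are Sturmian. -/
def IsStandard (u : ℕ → Bool) : Prop :=
  Sturmian u ∧ Sturmian (consSeq false u) ∧ Sturmian (consSeq true u)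

/-- The slope of a binary sequence, with the convention `ρ_b > ρ_a` (`a = false`, `b = true`). -/
def HasSlope (u : ℕ → Bool) (θ : ℝ) : Prop :=
  ∃ ρa ρb : ℝ, HasFreq u false ρa ∧ HasFreq u true ρb ∧ ρa < ρb ∧ θ = ρa / ρb

/-- `θ` has the (infinite) continued fraction expansion `[0; a 1, a 2, a 3, …]`:
there are complete quotients' fractional parts `t n ∈ (0,1)` with `t 0 = θ` and
`1 / t n = a (n+1) + t (n+1)` for all `n`. (The value `a 0` is irrelevant.) -/
def HasCF (θ : ℝ) (a : ℕ → ℕ) : Prop :=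
  ∃ t : ℕ → ℝ, t 0 = θ ∧ ∀ n, 0 < t n ∧ t n < 1 ∧ 1 / t n = (a (n + 1) : ℝ) + t (n + 1)

/-- Number of positions `< n` where `u` takes the value `c`. -/
def countBefore (u : ℕ → Bool) (c : Bool) (n : ℕ) : ℕ :=
  ((List.range n).filter fun i => u i = c).length

/-- The colouring of a binary sequence `u` by `y` (on the `a = false` positions)
and `y'` (on the `b = true` positions). -/
def colour (u : ℕ → Bool) (y : ℕ → α) (y' : ℕ → β) : ℕ → α ⊕ β := fun n =>
  if u n = false then Sum.inl (y (countBefore u false n))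
  else Sum.inr (y' (countBefore u true n))

/-- A constant gap sequence: periodic, and consecutive occurrences of each occurring
letter are at a constant distance. -/
def ConstantGap (y : ℕ → α) : Prop :=
  (∃ p, 0 < p ∧ ∀ n, y (n + p) = y n) ∧
  ∀ c : α, (∃ i, y i = c) → ∃ g, 0 < g ∧ ∀ i j, ConsecOcc y c i j → j - i = g

/-- The discolouration (projection) map: letters of the first alphabet go to `a = false`,
letters of the second alphabet go to `b = true`. -/
def proj : α ⊕ β → Bool := Sum.elim (fun _ => false) (fun _ => true)

/-- `v` is a return word to `w` in the sequence `z`. -/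
def IsReturnWord (z : ℕ → α) (w v : List α) : Prop :=
  ∃ i j : ℕ, i < j ∧ OccursAt z w i ∧ OccursAt z w j ∧
    (∀ k, i < k → k < j → ¬ OccursAt z w k) ∧ v = factorAt z i (j - i)

def RightSpecial (z : ℕ → α) (w : List α) : Prop :=
  ∃ a b : α, a ≠ b ∧ IsFactor z (w ++ [a]) ∧ IsFactor z (w ++ [b])

def LeftSpecial (z : ℕ → α) (w : List α) : Prop :=
  ∃ a b : α, a ≠ b ∧ IsFactor z (a :: w) ∧ IsFactor z (b :: w)

def Bispecial (z : ℕ → α) (w : List α) : Prop := LeftSpecial z w ∧ RightSpecial z w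

/-- `o` enumerates, in increasing order, all occurrences of `w` in `z`. -/
def IsOccEnum (z : ℕ → α) (w : List α) (o : ℕ → ℕ) : Prop :=
  StrictMono o ∧ (∀ n, OccursAt z w (o n)) ∧ ∀ i, OccursAt z w i → ∃ n, o n = i

/-- The derived sequence of `z` with respect to the occurrence enumeration `o` of a factor:
its `n`-th letter is the return word between the `n`-th and `(n+1)`-st occurrences. -/
def derivedSeq (z : ℕ → α) (o : ℕ → ℕ) : ℕ → List α :=
  fun n => factorAt z (o n) (o (n + 1) - o n)

/-- The slope of a sequence over a two-letter alphabet: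
the ratio of the smaller letter frequency to the larger one. -/
def HasSlope2 {γ : Type*} [DecidableEq γ] (z : ℕ → γ) (θ : ℝ) : Prop :=
  ∃ (c c' : γ) (ρ ρ' : ℝ), c ≠ c' ∧ (∀ n, z n = c ∨ z n = c') ∧
    HasFreq z c ρ ∧ HasFreq z c' ρ' ∧ ρ < ρ' ∧ θ = ρ / ρ'

/-- The purely cyclic constant gap sequence `(0 1 ⋯ (δ-1))^ω` over `ZMod δ`. -/
def cyc (δ : ℕ) : ℕ → ZMod δ := fun n => (n : ZMod δ)

/-- The colouring `colour(u, (1 2 ⋯ δ)^ω, (1' 2' ⋯ δ')^ω)` over `2δ` letters. -/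
def colourCyc (δ : ℕ) (u : ℕ → Bool) : ℕ → ZMod δ ⊕ ZMod δ := colour u (cyc δ) (cyc δ)


/-!
Inside `abXab` the word `X` avoids `a` and `b`, so it cannot contain a window of `d - 1` pairwise
distinct letters, whence `|X| + 2 ≤ d`. Since `a` does not recur in `bX`, the factor `abXab` has
minimal period `|X| + 2`, so its exponent `(|X| + 4) / (|X| + 2)` is at least `(d + 2) / d`.
-/

theorem factorAt_add (v : ℕ → α) (i m n : ℕ) :
    factorAt v i (m + n) = factorAt v i m ++ factorAt v (i + m) n := by
  simp [factorAt, List.range_add, add_assoc]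

theorem occursAt_append {v : ℕ → α} {u w : List α} {i : ℕ} :
    OccursAt v (u ++ w) i ↔ OccursAt v u i ∧ OccursAt v w (i + u.length) := by
  rw [OccursAt, List.length_append, factorAt_add]
  constructor
  · intro h
    exact List.append_inj h (by simp [factorAt])
  · rintro ⟨hu, hw⟩
    rw [hu, hw]

theorem OccursAt.take {v : ℕ → α} {w : List α} {i : ℕ} (h : OccursAt v w i) {n : ℕ}
    (hn : n ≤ w.length) : factorAt v i n = w.take n := by
  rw [← List.take_append_drop n w, occursAt_append] at h
  simpa [OccursAt, hn] using h.1

theorem length_add_two_le_of_nodup_windows [Fintype α] {d : ℕ} (hcard : Fintype.card α = d)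
    {v : ℕ → α} (hnodup : ∀ i : ℕ, (factorAt v i (d - 1)).Nodup)
    {X : List α} {j : ℕ} (hX : OccursAt v X j)
    {a b : α} (hab : a ≠ b) (haX : a ∉ X) (hbX : b ∉ X) :
    X.length + 2 ≤ d := by
  by_contra! hlong
  have hwindow : (X.take (d - 1)).Nodup := hX.take (n := d - 1) (by omega) ▸ hnodup j
  have hext : (a :: b :: X.take (d - 1)).Nodup := by
    simp only [List.nodup_cons, List.mem_cons, not_or]
    exact ⟨⟨hab, fun h => haX (List.mem_of_mem_take h)⟩,
      fun h => hbX (List.mem_of_mem_take h), hwindow⟩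
  have := hext.length_le_card
  simp only [List.length_cons, List.length_take, hcard] at this
  omega

theorem isPeriod_append_take {w : List α} (hw : w ≠ []) (k : ℕ) :
    IsPeriod (w ++ w.take k) w.length := by
  refine ⟨List.length_pos_iff.mpr hw, fun i hi => ?_⟩
  simp only [List.length_append, List.length_take] at hi
  rw [List.getElem?_append_left (by omega), List.getElem?_append_right (by omega),
    Nat.add_sub_cancel, List.getElem?_take_of_lt (by omega)]

theorem IsPeriod.mem_take {a : α} {w : List α} {p : ℕ} (h : IsPeriod (a :: w) p)
    (hp : p ≤ w.length) : a ∈ w.take p := by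
  obtain ⟨hp0, hper⟩ := h
  have hfirst := hper 0 (by simp; omega)
  obtain ⟨q, rfl⟩ := Nat.exists_eq_add_one_of_ne_zero hp0.ne'
  rw [List.mem_iff_getElem?]
  exact ⟨q, by simpa [List.getElem?_take_of_lt] using hfirst.symm⟩

theorem minPeriod_cons_append_take {a : α} {w : List α} (ha : a ∉ w) {k : ℕ} (hk : 0 < k) :
    minPeriod ((a :: w) ++ (a :: w).take k) = w.length + 1 := by
  refine IsLeast.csInf_eq ⟨isPeriod_append_take (List.cons_ne_nil a w) k, fun p hp => ?_⟩
  by_contra! hshort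
  have hmem := IsPeriod.mem_take (w := w ++ (a :: w).take k) hp (by simp; omega)
  rw [List.take_append_of_le_length (by omega)] at hmem
  exact ha (List.mem_of_mem_take hmem)

theorem expE_le_criticalExponent {v : ℕ → α} {z : List α} (hz : IsFactor v z) (hne : z ≠ []) :
    expE z ≤ criticalExponent v :=
  le_iSup₂ (f := fun z (_ : IsFactor v z ∧ z ≠ []) => expE z) z ⟨hz, hne⟩

theorem natCast_add_div_le_of_le {m n : ℕ} (hn : 0 < n) (hnm : n ≤ m) (c : ℝ≥0∞) :
    ((m : ℝ≥0∞) + c) / m ≤ ((n : ℝ≥0∞) + c) / n := by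
  have hn' : (n : ℝ≥0∞) ≠ 0 := by exact_mod_cast hn.ne'
  have hm' : (m : ℝ≥0∞) ≠ 0 := by exact_mod_cast (hn.trans_le hnm).ne'
  rw [ENNReal.add_div, ENNReal.add_div, ENNReal.div_self hm' (ENNReal.natCast_ne_top m),
    ENNReal.div_self hn' (ENNReal.natCast_ne_top n)]
  gcongr

theorem statement3_general {α : Type*} [Fintype α] (d : ℕ)
    (hcard : Fintype.card α = d) (v : ℕ → α)
    (hnodup : ∀ i : ℕ, (factorAt v i (d - 1)).Nodup)
    (a b : α) (X : List α) (hab : a ≠ b) (haX : a ∉ X) (hbX : b ∉ X)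
    (hfac : IsFactor v ([a, b] ++ X ++ [a, b])) :
    X.length ≤ d - 2 ∧ ((d : ℝ≥0∞) + 2) / (d : ℝ≥0∞) ≤ criticalExponent v := by
  obtain ⟨i, hocc⟩ := id hfac
  have hX : OccursAt v X (i + 2) := (occursAt_append.mp (occursAt_append.mp hocc).1).2
  have hlen := length_add_two_le_of_nodup_windows hcard hnodup hX hab haX hbX
  refine ⟨by omega, ?_⟩
  have hword : [a, b] ++ X ++ [a, b] = (a :: b :: X) ++ (a :: b :: X).take 2 := by simp
  have hper : minPeriod ([a, b] ++ X ++ [a, b]) = X.length + 2 := by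
    rw [hword, minPeriod_cons_append_take (by simpa [hab] using haX) two_pos]; simp
  calc ((d : ℝ≥0∞) + 2) / d ≤ (((X.length + 2 : ℕ) : ℝ≥0∞) + 2) / (X.length + 2 : ℕ) :=
        natCast_add_div_le_of_le (by omega) hlen 2
    _ = expE ([a, b] ++ X ++ [a, b]) := by
        rw [expE, hper]; congr 1; simp; norm_num [add_assoc]
    _ ≤ criticalExponent v := expE_le_criticalExponent hfac (by simp)

theorem statement3 {α : Type*} [Fintype α] (d : ℕ) (hd : 2 ≤ d)
    (hcard : Fintype.card α = d) (v : ℕ → α)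
    (hnodup : ∀ i : ℕ, (factorAt v i (d - 1)).Nodup)
    (a b : α) (X : List α) (hab : a ≠ b) (haX : a ∉ X) (hbX : b ∉ X)
    (hfac : IsFactor v ([a, b] ++ X ++ [a, b])) :
    X.length ≤ d - 2 ∧ ((d : ℝ≥0∞) + 2) / (d : ℝ≥0∞) ≤ criticalExponent v :=
  statement3_general d hcard v hnodup a b X hab haX hbX hfac

end BalancedCE
end

section
/- Let δ ≥ 6 be an integer, let 𝐮 be a standard sequence over {a, b} whose slope has a continued fraction expansion of the form θ = [0, 1, ⌊δ/2⌋, a₃, a₄, …], and let 𝐱_{2δ} = colour(𝐮, (12⋯δ)^ω, (1′2′⋯δ′)^ω). Then the distance between any two consecutive occurrences of any letter in 𝐱_{2δ} is at least 2δ−2. -/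
open Filter
open scoped ENNReal

namespace BalancedCE

variable {α : Type*} {β : Type*}

open Topology

/-!
Write `a = false` and `b = true`. A Sturmian word has three factors of length 2, among them `ab`
and `ba`, so it cannot contain both `aa` and `bb`; without `bb` the `b`s would be isolated and
`ρ_b ≤ ρ_a`, hence `aa` never occurs. Then on every prefix `#b - #a` is the number of occurrences
of `bb` up to one, so `bb` has frequency `ρ_b - ρ_a = (1 - θ) / (1 + θ) < 1 / δ`, the last
inequality because `θ = [0; 1, ⌊δ/2⌋, …] > (δ - 1) / (δ + 1)`. Consequently some `bb` is followed
by no other `bb` for `δ` positions. Two occurrences of `bb` at distance `d ≤ δ - 2` would then give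
`δ + 2` distinct factors of length `δ`, one too many, so occurrences of `bb` lie at least `δ - 1`
apart.

Two equal letters of the colouring enclose at least `δ` occurrences of the same letter of `u`.
Between two `a`s there are at least as many `b`s as `a`s, giving distance `≥ 2δ`; between two `b`s
the excess of `b`s over `a`s is the number of `bb`s, at most two in a window of length `< 2δ - 2`.
-/

section Counting

lemma countBefore_eq_sum (v : ℕ → Bool) (c : Bool) (n : ℕ) :
    countBefore v c n = ∑ k ∈ Finset.range n, if v k = c then 1 else 0 := by
  rw [← Finset.card_filter]
  rfl

lemma countBefore_succ (v : ℕ → Bool) (c : Bool) (n : ℕ) :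
    countBefore v c (n + 1) = countBefore v c n + if v n = c then 1 else 0 := by
  simp only [countBefore_eq_sum, Finset.sum_range_succ]

lemma countBefore_mono (v : ℕ → Bool) (c : Bool) : Monotone (countBefore v c) :=
  monotone_nat_of_le_succ fun n => by rw [countBefore_succ]; omega

lemma countBefore_true_add_false (v : ℕ → Bool) (n : ℕ) :
    countBefore v true n + countBefore v false n = n := by
  induction n with
  | zero => rfl
  | succ n ih => cases h : v n <;> simp [countBefore_succ, h] <;> omega

lemma countBefore_eq_zero {v : ℕ → Bool} {c : Bool} (h : ∀ k, v k ≠ c) (n : ℕ) :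
    countBefore v c n = 0 := by
  simp [countBefore_eq_sum, h]

lemma countBefore_add_le_of_separated {v : ℕ → Bool} {g : ℕ}
    (hsep : ∀ x y, v x = true → v y = true → x < y → x + g ≤ y) (x : ℕ) :
    countBefore v true (x + g) ≤ countBefore v true x + 1 := by
  rw [countBefore_eq_sum, countBefore_eq_sum, ← Finset.sum_range_add_sum_Ico _ (x.le_add_right g),
    add_le_add_iff_left, ← Finset.card_filter]
  refine Finset.card_le_one.2 fun y hy z hz => ?_
  simp only [Finset.mem_filter, Finset.mem_Ico] at hy hz
  rcases lt_trichotomy y z with h | h | h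
  · have := hsep y z hy.2 hz.2 h; omega
  · exact h
  · have := hsep z y hz.2 hy.2 h; omega

lemma le_mul_countBefore_of_syndetic {v : ℕ → Bool} {L i₁ : ℕ} (hi₁ : v i₁ = true)
    (hnext : ∀ x, v x = true → ∃ y, x < y ∧ y ≤ x + L ∧ v y = true) (n : ℕ) :
    n ≤ L * countBefore v true n + i₁ := by
  induction n using Nat.strong_induction_on with | _ n ih => ?_
  rcases le_or_gt n i₁ with hn | hn
  · omega
  set x := Nat.findGreatest (fun k => v k = true) (n - 1)
  have hx : v x = true :=
    Nat.findGreatest_spec (P := fun k => v k = true) (m := i₁) (by omega) hi₁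
  have hxn : x < n := by
    have := Nat.findGreatest_le (P := fun k => v k = true) (n - 1)
    omega
  obtain ⟨y, hxy, hyx, hy⟩ := hnext x hx
  have hny : n ≤ y := by
    by_contra!
    exact Nat.findGreatest_is_greatest hxy (by omega) hy
  have hcount : countBefore v true x + 1 ≤ countBefore v true n := by
    have := countBefore_mono v true (show x + 1 ≤ n by omega)
    rwa [countBefore_succ, if_pos hx] at this
  have := ih x hxn
  have := Nat.mul_le_mul_left L hcount
  rw [mul_add] at this
  omega

end Counting

section Frequencies

lemma count_factorAt_zero (v : ℕ → Bool) (c : Bool) (n : ℕ) :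
    (factorAt v 0 n).count c = countBefore v c n := by
  unfold factorAt countBefore
  rw [List.count_eq_countP, List.countP_map, List.countP_eq_length_filter]
  simp [Function.comp_def, Bool.beq_eq_decide_eq]

lemma HasFreq.tendsto_countBefore {v : ℕ → Bool} {c : Bool} {ρ : ℝ} (h : HasFreq v c ρ) :
    Tendsto (fun n => (countBefore v c n : ℝ) / n) atTop (𝓝 ρ) := by
  simpa only [HasFreq, count_factorAt_zero] using h

lemma le_of_tendsto_div {f : ℕ → ℝ} {ρ a C : ℝ} (hf : Tendsto (fun n => f n / n) atTop (𝓝 ρ))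
    (h : ∀ n : ℕ, a * n ≤ f n + C) : a ≤ ρ := by
  have hlim := hf.add (tendsto_const_div_atTop_nhds_zero_nat C)
  rw [add_zero] at hlim
  refine ge_of_tendsto hlim ?_
  filter_upwards [eventually_gt_atTop 0] with n hn
  rw [← add_div, le_div_iff₀ (by exact_mod_cast hn)]
  exact h n

lemma freq_false_add_freq_true {v : ℕ → Bool} {ρa ρb : ℝ} (ha : HasFreq v false ρa)
    (hb : HasFreq v true ρb) : ρa + ρb = 1 := by
  refine tendsto_nhds_unique (ha.tendsto_countBefore.add hb.tendsto_countBefore)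
    (tendsto_const_nhds.congr' ?_)
  filter_upwards [eventually_gt_atTop 0] with n hn
  rw [← add_div, ← Nat.cast_add, add_comm, countBefore_true_add_false, div_self (by positivity)]

lemma natCast_mul_freq_sub_lt {v : ℕ → Bool} {ρa ρb : ℝ} (ha : HasFreq v false ρa)
    (hb : HasFreq v true ρb) (hab : ρa < ρb) {δ : ℕ}
    (hθ : (δ : ℝ) * (1 - ρa / ρb) < 1 + ρa / ρb) : (δ : ℝ) * (ρb - ρa) < 1 := by
  have hsum := freq_false_add_freq_true ha hb
  have hρb : 0 < ρb := by linarith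
  calc (δ : ℝ) * (ρb - ρa) = ρb * (δ * (1 - ρa / ρb)) := by field_simp
    _ < ρb * (1 + ρa / ρb) := mul_lt_mul_of_pos_left hθ hρb
    _ = 1 := by field_simp; linarith

lemma HasCF.natCast_mul_one_sub_lt {θ : ℝ} {a : ℕ → ℕ} {δ : ℕ} (hcf : HasCF θ a)
    (ha1 : a 1 = 1) (ha2 : a 2 = δ / 2) : (δ : ℝ) * (1 - θ) < 1 + θ := by
  obtain ⟨t, rfl, ht⟩ := hcf
  obtain ⟨ht₀, -, h₀⟩ := ht 0
  obtain ⟨ht₁, -, h₁⟩ := ht 1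
  have ht₂ := (ht 2).1
  rw [ha1, Nat.cast_one] at h₀
  rw [ha2] at h₁
  have e₀ : t 0 * (1 + t 1) = 1 := by rw [← h₀]; field_simp
  have e₁ : t 1 * ((δ / 2 : ℕ) + t 2) = 1 := by rw [← h₁]; field_simp
  have hδ : (δ : ℝ) ≤ 2 * ((δ / 2 : ℕ) : ℝ) + 1 := by
    exact_mod_cast (by omega : δ ≤ 2 * (δ / 2) + 1)
  have hδt₁ : (δ : ℝ) * t 1 < 2 + t 1 := by nlinarith [mul_pos ht₁ ht₂]
  nlinarith

end Frequencies

section Windows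

variable {v : ℕ → α}

@[simp] lemma factorAt_length (v : ℕ → α) (x L : ℕ) : (factorAt v x L).length = L := by
  simp [factorAt]

lemma isFactor_factorAt (v : ℕ → α) (x L : ℕ) : IsFactor v (factorAt v x L) :=
  ⟨x, by rw [factorAt_length]⟩

lemma apply_add_eq_of_factorAt_eq {x y L k : ℕ} (h : factorAt v x L = factorAt v y L)
    (hk : k < L) : v (x + k) = v (y + k) := by
  simpa [factorAt, hk] using congrArg (·[k]?) h

lemma factorAt_two (x : ℕ) : factorAt v x 2 = [v x, v (x + 1)] := by
  simp [factorAt, List.range_succ]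

lemma le_complexity_of_nodup [Finite α] {L : ℕ} {ws : List (List α)} (hws : ws.Nodup)
    (hfac : ∀ w ∈ ws, IsFactor v w ∧ w.length = L) : ws.length ≤ complexity v L := by
  classical
  rw [← List.toFinset_card_of_nodup hws, ← Set.ncard_coe_finset]
  exact Set.ncard_le_ncard (fun w hw => hfac w (List.mem_toFinset.1 hw))
    ((List.finite_length_eq α L).subset fun _ hw => hw.2)

end Windows

section DoubleLetters

variable {u : ℕ → Bool}

def doubleAt (u : ℕ → Bool) (c : Bool) (k : ℕ) : Bool := decide (u k = c ∧ u (k + 1) = c)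

@[simp] lemma doubleAt_eq_true {c : Bool} {k : ℕ} :
    doubleAt u c k = true ↔ u k = c ∧ u (k + 1) = c :=
  decide_eq_true_iff

lemma countBefore_add_doubleAt (u : ℕ → Bool) (n : ℕ) :
    countBefore u true n + countBefore (doubleAt u false) true n + (u n).toNat =
      countBefore u false n + countBefore (doubleAt u true) true n + (u 0).toNat := by
  induction n with
  | zero => simp [countBefore]
  | succ n ih =>
    simp only [countBefore_succ]
    cases h₀ : u n <;> cases h₁ : u (n + 1) <;> simp [doubleAt, h₀, h₁] at ih ⊢ <;> omega

lemma countBefore_doubleAt_false (hnoaa : ∀ k, u k = false → u (k + 1) = true) (n : ℕ) :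
    countBefore (doubleAt u false) true n = 0 :=
  countBefore_eq_zero (fun k => by simpa using hnoaa k) n

lemma factorAt_ne_of_doubleAt {c : Bool} {x y k L : ℕ} (hk : k + 2 ≤ L)
    (hx : doubleAt u c (x + k) = true) (hy : doubleAt u c (y + k) = false) :
    factorAt u x L ≠ factorAt u y L := by
  intro h
  have e₀ : u (x + k) = u (y + k) := apply_add_eq_of_factorAt_eq h (by omega)
  have e₁ : u (x + k + 1) = u (y + k + 1) := apply_add_eq_of_factorAt_eq h (k := k + 1) (by omega)
  rw [doubleAt, e₀, e₁, ← doubleAt, hy] at hx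
  cases hx

lemma exists_eq_and_succ_eq_not (hap : ¬ EventuallyPeriodic u) (c : Bool) :
    ∃ i, u i = c ∧ u (i + 1) = !c := by
  have hconst : ∀ N, ¬ ∀ n, N ≤ n → u n = u N := fun N h =>
    hap ⟨1, one_pos, N, fun n hn => by rw [h n hn, h (n + 1) (by omega)]⟩
  obtain ⟨i₀, hi₀⟩ : ∃ i, u i = c := by
    by_contra! h
    exact hconst 0 fun n _ => (Bool.eq_not_of_ne (h n)).trans (Bool.eq_not_of_ne (h 0)).symm
  by_contra! h
  refine hconst i₀ fun n hn => ?_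
  induction n, hn using Nat.le_induction with
  | base => rfl
  | succ n hn ih => simpa [ih, hi₀] using h n (ih.trans hi₀)

lemma exists_doubleAt_ge (hap : ¬ EventuallyPeriodic u)
    (hnoaa : ∀ k, u k = false → u (k + 1) = true) (N : ℕ) :
    ∃ k, N ≤ k ∧ doubleAt u true k = true := by
  by_contra! h
  refine hap ⟨2, two_pos, N, fun n hn => ?_⟩
  have h₀ := h n hn
  have h₁ := h (n + 1) (by omega)
  have a₀ := hnoaa n
  have a₁ := hnoaa (n + 1)
  simp only [doubleAt, ne_eq, decide_eq_true_eq, not_and] at h₀ h₁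
  cases hx : u n <;> cases hy : u (n + 1) <;> simp_all

lemma no_aa (hap : ¬ EventuallyPeriodic u) (hc2 : complexity u 2 = 3) {ρa ρb : ℝ}
    (ha : HasFreq u false ρa) (hb : HasFreq u true ρb) (hab : ρa < ρb) :
    ∀ k, u k = false → u (k + 1) = true := by
  by_contra! ⟨i₀, hi₀, hi₀'⟩
  have hnobb : ∀ k, doubleAt u true k ≠ true := by
    intro k hk
    rw [doubleAt_eq_true] at hk
    obtain ⟨i₁, hi₁⟩ := exists_eq_and_succ_eq_not hap false
    obtain ⟨i₂, hi₂⟩ := exists_eq_and_succ_eq_not hap true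
    have h4 := le_complexity_of_nodup (v := u) (L := 2)
      (ws := [[false, false], [true, true], [false, true], [true, false]]) (by decide) ?_
    · rw [hc2] at h4
      simp at h4
    simp only [List.mem_cons, List.not_mem_nil, or_false]
    rintro w (rfl | rfl | rfl | rfl)
    · exact ⟨⟨i₀, by simpa [factorAt_two, hi₀] using hi₀'⟩, rfl⟩
    · exact ⟨⟨k, by simp [factorAt_two, hk]⟩, rfl⟩
    · exact ⟨⟨i₁, by simp [factorAt_two, hi₁]⟩, rfl⟩
    · exact ⟨⟨i₂, by simp [factorAt_two, hi₂]⟩, rfl⟩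
  have hbound : ∀ n : ℕ, 0 * (n : ℝ) ≤ (countBefore u false n - countBefore u true n : ℝ) + 1 := by
    intro n
    have h := countBefore_add_doubleAt u n
    rw [countBefore_eq_zero hnobb] at h
    have : countBefore u true n ≤ countBefore u false n + 1 := by
      have := Bool.toNat_le (u 0)
      omega
    rw [zero_mul]
    linarith [(by exact_mod_cast this : (countBefore u true n : ℝ) ≤ countBefore u false n + 1)]
  have := le_of_tendsto_div
    (by simpa only [sub_div] using ha.tendsto_countBefore.sub hb.tendsto_countBefore) hbound
  linarith

lemma exists_doubleAt_isolated (hap : ¬ EventuallyPeriodic u)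
    (hnoaa : ∀ k, u k = false → u (k + 1) = true) {ρa ρb : ℝ}
    (ha : HasFreq u false ρa) (hb : HasFreq u true ρb) {L : ℕ} (hL : (L : ℝ) * (ρb - ρa) < 1) :
    ∃ i₀, doubleAt u true i₀ = true ∧ ∀ k, i₀ < k → k ≤ i₀ + L → doubleAt u true k = false := by
  by_contra! hsyn
  obtain ⟨i₁, -, hi₁⟩ := exists_doubleAt_ge hap hnoaa 0
  have hbound : ∀ n : ℕ, 1 * (n : ℝ) ≤
      L * ((countBefore u true n : ℝ) - countBefore u false n) + (L + i₁) := by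
    intro n
    have h₁ := le_mul_countBefore_of_syndetic hi₁ (fun x hx => by simpa using hsyn x hx) n
    have h₂ := countBefore_add_doubleAt u n
    rw [countBefore_doubleAt_false hnoaa] at h₂
    have h₃ : countBefore (doubleAt u true) true n + countBefore u false n ≤
        countBefore u true n + 1 := by
      have := Bool.toNat_le (u n)
      omega
    have h₁' : (n : ℝ) ≤ L * countBefore (doubleAt u true) true n + i₁ := by exact_mod_cast h₁
    have h₃' : (countBefore (doubleAt u true) true n : ℝ) + countBefore u false n ≤
        countBefore u true n + 1 := by exact_mod_cast h₃
    have hL0 : (0 : ℝ) ≤ L := L.cast_nonneg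
    nlinarith
  have := le_of_tendsto_div (by simpa only [mul_div_assoc, sub_div] using
    (hb.tendsto_countBefore.sub ha.tendsto_countBefore).const_mul (L : ℝ)) hbound
  linarith

lemma nodup_factorAt_of_isolated_doubleAt {L i₀ p s d : ℕ} (hi₀ : doubleAt u true i₀ = true)
    (hzone : ∀ k, i₀ < k → k ≤ i₀ + L → doubleAt u true k = false) (hpL : i₀ + L < p)
    (hp : doubleAt u true p = true) (hpmin : ∀ k, i₀ < k → k < p → doubleAt u true k = false)
    (hs : doubleAt u true s = true) (hsd : doubleAt u true (s + d) = true) (hd : 0 < d)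
    (hL : d + 2 ≤ L) :
    (([i₀ + 1, i₀ + 2, s, i₀] ++ (List.range' 1 (L - 2)).map (p - ·)).map
      (factorAt u · L)).Nodup := by
  have hu₁ : u (i₀ + 1) = true := (doubleAt_eq_true.1 hi₀).2
  have hu₂ : u (i₀ + 2) = false := by
    simpa [doubleAt, hu₁] using hzone (i₀ + 1) (by omega) (by omega)
  have hdist : ∀ {x y} k, k + 2 ≤ L → doubleAt u true (x + k) = true →
      doubleAt u true (y + k) = false →
      factorAt u x L ≠ factorAt u y L ∧ factorAt u y L ≠ factorAt u x L := fun k hk hx hy =>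
    ⟨factorAt_ne_of_doubleAt hk hx hy, (factorAt_ne_of_doubleAt hk hx hy).symm⟩
  -- Two alternating windows after `i₀`, the window at `i₀` (whose only `bb` is at offset 0),
  -- those at `p - o` (first `bb` at offset `o`), and the window at `s` (`bb` at offsets 0 and `d`).
  rw [List.Nodup, List.pairwise_map, List.pairwise_append, List.pairwise_map]
  refine ⟨?_, ?_, ?_⟩
  · simp only [List.pairwise_cons, List.mem_cons, List.not_mem_nil, or_false, forall_eq_or_imp,
      forall_eq, List.Pairwise.nil, and_true]
    refine ⟨⟨fun h => ?_, (hdist 0 ?_ ?_ ?_).2, (hdist 0 ?_ ?_ ?_).2⟩,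
      ⟨(hdist 0 ?_ ?_ ?_).2, (hdist 0 ?_ ?_ ?_).2⟩, (hdist d ?_ ?_ ?_).1, fun _ => False.elim⟩
    · simpa [hu₁, hu₂] using apply_add_eq_of_factorAt_eq h (k := 0) (by omega)
    all_goals first
      | omega
      | simpa using hs
      | simpa using hi₀
      | exact hsd
      | exact hzone _ (by omega) (by omega)
  · refine (List.pairwise_lt_range' (s := 1) (n := L - 2)).imp_of_mem fun {o o'} ho ho' hoo' => ?_
    rw [List.mem_range'_1] at ho ho'
    refine (hdist o (by omega) ?_ (hpmin _ (by omega) (by omega))).1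
    rwa [Nat.sub_add_cancel (by omega)]
  · simp only [List.mem_cons, List.not_mem_nil, or_false, List.mem_map, List.mem_range'_1]
    rintro x hx _ ⟨o, ho, rfl⟩
    have hpo : doubleAt u true (p - o + o) = true := by rwa [Nat.sub_add_cancel (by omega)]
    rcases hx with rfl | rfl | rfl | rfl
    · exact (hdist o (by omega) hpo (hzone _ (by omega) (by omega))).2
    · exact (hdist o (by omega) hpo (hzone _ (by omega) (by omega))).2
    · exact (hdist 0 (by omega) (by simpa using hs) (hpmin _ (by omega) (by omega))).1
    · exact (hdist 0 (by omega) (by simpa using hi₀) (hpmin _ (by omega) (by omega))).1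

lemma le_add_one_of_doubleAt_add {L : ℕ} (hcompl : complexity u L = L + 1) {i₀ : ℕ}
    (hi₀ : doubleAt u true i₀ = true)
    (hzone : ∀ k, i₀ < k → k ≤ i₀ + L → doubleAt u true k = false)
    (hnext : ∃ p, i₀ < p ∧ doubleAt u true p = true) {s d : ℕ}
    (hs : doubleAt u true s = true) (hsd : doubleAt u true (s + d) = true) (hd : 0 < d) :
    L ≤ d + 1 := by
  classical
  by_contra! hL
  obtain ⟨hp₀, hp⟩ := Nat.find_spec hnext
  have hpmin : ∀ k, i₀ < k → k < Nat.find hnext → doubleAt u true k = false := fun k hk hkp =>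
    Bool.eq_false_iff.2 fun h => Nat.find_min hnext hkp ⟨hk, h⟩
  have hpL : i₀ + L < Nat.find hnext := by
    by_contra!
    exact Bool.false_ne_true ((hzone _ hp₀ this).symm.trans hp)
  have hcount := le_complexity_of_nodup
    (nodup_factorAt_of_isolated_doubleAt hi₀ hzone hpL hp hpmin hs hsd hd hL) (by
      simp only [List.mem_map]
      rintro _ ⟨x, -, rfl⟩
      exact ⟨isFactor_factorAt u x L, factorAt_length u x L⟩)
  simp only [List.length_map, List.length_append, List.length_cons, List.length_nil,
    List.length_range'] at hcount
  omega

lemma doubleAt_separated (hap : ¬ EventuallyPeriodic u) {L : ℕ}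
    (hcompl : complexity u L = L + 1) (hnoaa : ∀ k, u k = false → u (k + 1) = true) {ρa ρb : ℝ}
    (ha : HasFreq u false ρa) (hb : HasFreq u true ρb) (hL : (L : ℝ) * (ρb - ρa) < 1)
    (x y : ℕ) (hx : doubleAt u true x = true) (hy : doubleAt u true y = true) (hxy : x < y) :
    x + (L - 1) ≤ y := by
  obtain ⟨i₀, hi₀, hzone⟩ := exists_doubleAt_isolated hap hnoaa ha hb hL
  have := le_add_one_of_doubleAt_add hcompl hi₀ hzone (exists_doubleAt_ge hap hnoaa (i₀ + 1)) hx
    (d := y - x) (by rwa [Nat.add_sub_cancel' hxy.le]) (by omega)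
  omega

lemma two_mul_sub_two_le_sub (hnoaa : ∀ k, u k = false → u (k + 1) = true) {δ : ℕ}
    (hsep : ∀ x y, doubleAt u true x = true → doubleAt u true y = true → x < y → x + (δ - 1) ≤ y)
    {i j : ℕ} (hij : i ≤ j) (hji : u j = u i)
    (hcount : countBefore u (u i) i + δ ≤ countBefore u (u i) j) : 2 * δ - 2 ≤ j - i := by
  have hi := countBefore_add_doubleAt u i
  have hj := countBefore_add_doubleAt u j
  rw [countBefore_doubleAt_false hnoaa] at hi hj
  have hti := countBefore_true_add_false u i
  have htj := countBefore_true_add_false u j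
  have hbb := countBefore_mono (doubleAt u true) true hij
  cases hui : u i
  · rw [hui] at hji hcount
    simp only [hui, hji, Bool.toNat_false] at hi hj
    omega
  · rw [hui] at hji hcount
    simp only [hui, hji, Bool.toNat_true] at hi hj
    by_contra! hlt
    have h₁ := countBefore_add_le_of_separated hsep i
    have h₂ := countBefore_add_le_of_separated hsep (i + (δ - 1))
    have := countBefore_mono (doubleAt u true) true (show j ≤ i + (δ - 1) + (δ - 1) by omega)
    omega

end DoubleLetters

lemma countBefore_add_le_of_colourCyc_eq {δ : ℕ} {u : ℕ → Bool} {i j : ℕ} (hij : i < j)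
    (h : colourCyc δ u i = colourCyc δ u j) :
    u j = u i ∧ countBefore u (u i) i + δ ≤ countBefore u (u i) j := by
  have hmod : u j = u i ∧ ((countBefore u (u i) i : ℕ) : ZMod δ) = countBefore u (u i) j := by
    unfold colourCyc colour cyc at h
    cases hi : u i <;> cases hj : u j <;> simp [hi, hj] at h ⊢ <;> exact h
  refine ⟨hmod.1, ?_⟩
  have hlt : countBefore u (u i) i < countBefore u (u i) j := by
    have := countBefore_mono u (u i) (Nat.succ_le_of_lt hij)
    rw [countBefore_succ, if_pos rfl] at this
    omega
  have hdvd := (Nat.modEq_iff_dvd' hlt.le).1 ((ZMod.natCast_eq_natCast_iff _ _ _).1 hmod.2)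
  have := Nat.le_of_dvd (by omega) hdvd
  omega

theorem statement9_general (δ : ℕ) (u : ℕ → Bool) (hu : IsStandard u)
    (θ : ℝ) (hθ : HasSlope u θ) (a : ℕ → ℕ) (hcf : HasCF θ a)
    (ha1 : a 1 = 1) (ha2 : a 2 = δ / 2) :
    ∀ (c : ZMod δ ⊕ ZMod δ) (i j : ℕ),
      ConsecOcc (colourCyc δ u) c i j → 2 * δ - 2 ≤ j - i := by
  obtain ⟨⟨hap, hcompl⟩, -, -⟩ := hu
  obtain ⟨ρa, ρb, ha, hb, hab, rfl⟩ := hθ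
  have hnoaa := no_aa hap (hcompl 2) ha hb hab
  have hsep := doubleAt_separated hap (hcompl δ) hnoaa ha hb
    (natCast_mul_freq_sub_lt ha hb hab (hcf.natCast_mul_one_sub_lt ha1 ha2))
  rintro c i j ⟨hij, rfl, hj, -⟩
  obtain ⟨hji, hcount⟩ := countBefore_add_le_of_colourCyc_eq hij hj.symm
  exact two_mul_sub_two_le_sub hnoaa hsep hij.le hji hcount

theorem statement9 (δ : ℕ) (hδ : 6 ≤ δ) (u : ℕ → Bool) (hu : IsStandard u)
    (θ : ℝ) (hθ : HasSlope u θ) (a : ℕ → ℕ) (hcf : HasCF θ a)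
    (ha1 : a 1 = 1) (ha2 : a 2 = δ / 2) :
    ∀ (c : ZMod δ ⊕ ZMod δ) (i j : ℕ),
      ConsecOcc (colourCyc δ u) c i j → 2 * δ - 2 ≤ j - i :=
  statement9_general δ u hu θ hθ a hcf ha1 ha2

end BalancedCE
end

section
/- Let δ ≥ 1 be an integer, let 𝐮 be a Sturmian sequence over {a, b}, and let 𝐱 = colour(𝐮, (12⋯δ)^ω, (1′2′⋯δ′)^ω). If w is a bispecial factor of 𝐱 whose projection π(w) contains both letters a and b, then π(w) is a bispecial factor of 𝐮. -/
/-! The letter of `colourCyc δ u` at position `n` is determined by its colour `u n` and by the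
number of earlier positions of that colour, taken modulo `δ`. Along two occurrences of words with
the same projection these counts differ by a constant for each colour, so if the two words agree
at one position of a given colour, they agree at every position of that colour. When `w` contains
both colours, two extensions of `w` by letters of the same colour therefore coincide: distinct
left (right) extensions of `w` in `colourCyc δ u` project to distinct extensions of `π(w)` in `u`. -/

open Filter
open scoped ENNReal

namespace BalancedCE

variable {α : Type*} {β : Type*}

lemma occursAt_getElem {v : ℕ → α} {w : List α} {i : ℕ} (h : OccursAt v w i)
    {k : ℕ} (hk : k < w.length) : w[k] = v (i + k) := by
  have h' := congrArg (fun l => l[k]?) h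
  simp only [factorAt, List.getElem?_map, List.getElem?_range hk,
    List.getElem?_eq_getElem hk] at h'
  exact (Option.some_injective _ h').symm

lemma factorAt_take (v : ℕ → α) (i : ℕ) {k n : ℕ} (hk : k ≤ n) :
    (factorAt v i n).take k = factorAt v i k := by
  rw [factorAt, factorAt, ← List.map_take, List.take_range, min_eq_left hk]

lemma countBefore_add (u : ℕ → Bool) (c : Bool) (i n : ℕ) :
    countBefore u c (i + n) = countBefore u c i + (factorAt u i n).count c := by
  induction n with
  | zero => simp [factorAt]
  | succ n ih =>
    rw [← add_assoc]
    simp only [countBefore, factorAt, List.range_succ, List.filter_append, List.map_append,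
      List.length_append, List.count_append] at ih ⊢
    rw [ih]
    by_cases h : u (i + n) = c <;> simp [h, add_assoc]

lemma countBefore_sub_countBefore_of_factorAt_eq {u : ℕ → Bool} {i j n k : ℕ} (c : Bool)
    (h : factorAt u i n = factorAt u j n) (hk : k ≤ n) :
    (countBefore u c (i + k) : ℤ) - countBefore u c (j + k) =
      countBefore u c i - countBefore u c j := by
  have hk' : factorAt u i k = factorAt u j k := by
    rw [← factorAt_take u i hk, h, factorAt_take u j hk]
  rw [countBefore_add, countBefore_add, hk']
  push_cast
  ring

section Colouring

variable {δ : ℕ} {u : ℕ → Bool}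

lemma colourCyc_eq_colourCyc_iff {m n : ℕ} :
    colourCyc δ u m = colourCyc δ u n ↔
      u m = u n ∧ (countBefore u (u m) m : ZMod δ) = countBefore u (u m) n := by
  unfold colourCyc colour cyc
  cases hm : u m <;> cases hn : u n <;> simp

lemma proj_colourCyc (n : ℕ) : proj (colourCyc δ u n) = u n := by
  unfold colourCyc colour
  cases h : u n <;> simp [proj]

lemma factorAt_eq_map_proj {v : List (ZMod δ ⊕ ZMod δ)} {i : ℕ}
    (h : OccursAt (colourCyc δ u) v i) : factorAt u i v.length = v.map proj := by
  calc factorAt u i v.length = (factorAt (colourCyc δ u) i v.length).map proj := by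
        simp [factorAt, proj_colourCyc]
    _ = v.map proj := by rw [h]

lemma isFactor_map_proj {v : List (ZMod δ ⊕ ZMod δ)} (h : IsFactor (colourCyc δ u) v) :
    IsFactor u (v.map proj) := by
  obtain ⟨i, hi⟩ := h
  exact ⟨i, by rw [List.length_map]; exact factorAt_eq_map_proj hi⟩

lemma colourCyc_add_eq_of_factorAt_eq {i j n k m : ℕ} (h : factorAt u i n = factorAt u j n)
    (hk : k ≤ n) (hm : m < n) (hkm : u (i + k) = u (i + m))
    (heq : colourCyc δ u (i + k) = colourCyc δ u (j + k)) :
    colourCyc δ u (i + m) = colourCyc δ u (j + m) := by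
  obtain ⟨-, hck⟩ := colourCyc_eq_colourCyc_iff.mp heq
  have hum : u (i + m) = u (j + m) := by
    simpa [factorAt, List.getElem?_range hm] using congrArg (fun l => l[m]?) h
  refine colourCyc_eq_colourCyc_iff.mpr ⟨hum, ?_⟩
  rw [← hkm]
  have hdiff := congrArg (Int.cast : ℤ → ZMod δ)
    ((countBefore_sub_countBefore_of_factorAt_eq (u (i + k)) h hm.le).trans
      (countBefore_sub_countBefore_of_factorAt_eq (u (i + k)) h hk).symm)
  push_cast at hdiff
  rw [← sub_eq_zero, hdiff, hck, sub_self]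

lemma getElem_eq_of_occursAt_of_map_proj_eq {v v' : List (ZMod δ ⊕ ZMod δ)} {i j k m : ℕ}
    (hv : OccursAt (colourCyc δ u) v i) (hv' : OccursAt (colourCyc δ u) v' j)
    (hp : v.map proj = v'.map proj) (hk : k < v.length) (hk' : k < v'.length)
    (hm : m < v.length) (hm' : m < v'.length) (hkk : v[k] = v'[k])
    (hkm : proj v[k] = proj v[m]) : v[m] = v'[m] := by
  have hn : v.length = v'.length := by simpa using congrArg List.length hp
  have hf : factorAt u i v.length = factorAt u j v.length := by
    rw [factorAt_eq_map_proj hv, hp, hn, factorAt_eq_map_proj hv']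
  rw [occursAt_getElem hv, occursAt_getElem hv'] at hkk ⊢
  rw [occursAt_getElem hv hk, occursAt_getElem hv hm, proj_colourCyc, proj_colourCyc] at hkm
  exact colourCyc_add_eq_of_factorAt_eq hf hk.le hm hkm hkk

lemma leftSpecial_map_proj {w : List (ZMod δ ⊕ ZMod δ)} (hw : LeftSpecial (colourCyc δ u) w)
    (hproj : ∀ c, c ∈ w.map proj) : LeftSpecial u (w.map proj) := by
  obtain ⟨a, b, hab, ha, hb⟩ := hw
  refine ⟨proj a, proj b, fun hp => hab ?_, by simpa using isFactor_map_proj ha,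
    by simpa using isFactor_map_proj hb⟩
  obtain ⟨k, hk, hwk⟩ := List.getElem_of_mem (hproj (proj a))
  rw [List.getElem_map] at hwk
  rw [List.length_map] at hk
  obtain ⟨i, hi⟩ := ha
  obtain ⟨j, hj⟩ := hb
  exact getElem_eq_of_occursAt_of_map_proj_eq (k := k + 1) (m := 0) hi hj (by simp [hp])
    (by simpa using hk) (by simpa using hk) (by simp) (by simp) rfl hwk

lemma rightSpecial_map_proj {w : List (ZMod δ ⊕ ZMod δ)} (hw : RightSpecial (colourCyc δ u) w)
    (hproj : ∀ c, c ∈ w.map proj) : RightSpecial u (w.map proj) := by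
  obtain ⟨a, b, hab, ha, hb⟩ := hw
  refine ⟨proj a, proj b, fun hp => hab ?_, by simpa using isFactor_map_proj ha,
    by simpa using isFactor_map_proj hb⟩
  obtain ⟨k, hk, hwk⟩ := List.getElem_of_mem (hproj (proj a))
  rw [List.getElem_map] at hwk
  rw [List.length_map] at hk
  obtain ⟨i, hi⟩ := ha
  obtain ⟨j, hj⟩ := hb
  simpa using getElem_eq_of_occursAt_of_map_proj_eq (k := k) (m := w.length) hi hj
    (by simp [hp]) (by simp; omega) (by simp; omega) (by simp) (by simp)
    (by simp [List.getElem_append_left hk]) (by simpa [List.getElem_append_left hk] using hwk)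

end Colouring

theorem statement12_general (δ : ℕ) (u : ℕ → Bool)
    (w : List (ZMod δ ⊕ ZMod δ)) (hw : Bispecial (colourCyc δ u) w)
    (hπa : false ∈ w.map proj) (hπb : true ∈ w.map proj) :
    Bispecial u (w.map proj) := by
  have hproj : ∀ c, c ∈ w.map proj := Bool.forall_bool.mpr ⟨hπa, hπb⟩
  exact ⟨leftSpecial_map_proj hw.1 hproj, rightSpecial_map_proj hw.2 hproj⟩

theorem statement12 (δ : ℕ) (hδ : 1 ≤ δ) (u : ℕ → Bool) (hu : Sturmian u)
    (w : List (ZMod δ ⊕ ZMod δ)) (hw : Bispecial (colourCyc δ u) w)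
    (hπa : false ∈ w.map proj) (hπb : true ∈ w.map proj) :
    Bispecial u (w.map proj) :=
  statement12_general δ u w hw hπa hπb

end BalancedCE
end
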